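/- arXiv:2409.09539 — 2 statements merged into one kernel-verified Lean document; each statement's English description precedes it below -/
import Mathlib

section
/- Let u_{t+1} = u_t + (c-b)·m_t + (b - \bar{γ})·ξ_t and m_{t+1} = c·m_t + γ·ξ_t, where c = b(1-γ), \bar{γ} = 1-γ, ρ = bγ/(1-c) (assuming c ≠ 1), ν = b - \bar{γ} - ργ. Then for all t ≥ 1: u_t - ρ·m_t = u_0 - ρ·m_0 + ν·∑_{k=0}^{t-1} ξ_k. -/
/-!
Since `ρ = ρ c + b γ` is the fixed point of `ρ ↦ ρ c - (c - b)`, the `m`-terms cancel in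
`u_{t+1} - ρ m_{t+1}`, so each step adds exactly `ν ξ_t` and `u_t - ρ m_t` telescopes.
-/

open Finset

section LinearRecursion

variable {R M : Type*} [CommRing R] [AddCommGroup M] [Module R M]

theorem eq_add_smul_sum_range_of_succ {w ξ : ℕ → M} (r : R)
    (h : ∀ t, w (t + 1) = w t + r • ξ t) (t : ℕ) :
    w t = w 0 + r • ∑ k ∈ range t, ξ k := by
  have telescope := sum_range_sub w t
  simp only [h, add_sub_cancel_left, ← smul_sum] at telescope
  rw [telescope, add_sub_cancel]

theorem sub_smul_succ_of_fixedPoint {u m ξ : ℕ → M} {a d c γ ρ : R}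
    (hu : ∀ t, u (t + 1) = u t + a • m t + d • ξ t)
    (hm : ∀ t, m (t + 1) = c • m t + γ • ξ t) (hρ : ρ = ρ * c - a) (t : ℕ) :
    u (t + 1) - ρ • m (t + 1) = u t - ρ • m t + (d - ρ * γ) • ξ t := by
  rw [hu, hm]
  nth_rewrite 2 [hρ]
  simp only [smul_add, sub_smul, mul_smul]
  abel

end LinearRecursion

theorem stmt_10_general {n : ℕ} (b γ : ℝ)
    (c ρ ν : ℝ) (hc : c = b * (1 - γ)) (hc1 : c ≠ 1)
    (hρ : ρ = b * γ / (1 - c)) (hν : ν = b - (1 - γ) - ρ * γ)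
    (u m ξ : ℕ → EuclideanSpace ℝ (Fin n))
    (hu : ∀ t, u (t + 1) = u t + (c - b) • m t + (b - (1 - γ)) • ξ t)
    (hm : ∀ t, m (t + 1) = c • m t + γ • ξ t) :
    ∀ t ≥ 1, u t - ρ • m t = u 0 - ρ • m 0 + ν • ∑ k ∈ Finset.range t, ξ k := by
  have hfix : ρ = ρ * c - (c - b) := by
    have : 1 - c ≠ 0 := sub_ne_zero.mpr hc1.symm
    rw [hρ]
    field_simp
    rw [hc]
    ring
  intro t _
  rw [hν]
  exact eq_add_smul_sum_range_of_succ (w := fun t ↦ u t - ρ • m t) _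
    (sub_smul_succ_of_fixedPoint hu hm hfix) t

theorem stmt_10 {n : ℕ} (b γ : ℝ) (hγ0 : 0 < γ) (hγ1 : γ < 1)
    (c ρ ν : ℝ) (hc : c = b * (1 - γ)) (hc1 : c ≠ 1)
    (hρ : ρ = b * γ / (1 - c)) (hν : ν = b - (1 - γ) - ρ * γ)
    (u m ξ : ℕ → EuclideanSpace ℝ (Fin n))
    (hu : ∀ t, u (t + 1) = u t + (c - b) • m t + (b - (1 - γ)) • ξ t)
    (hm : ∀ t, m (t + 1) = c • m t + γ • ξ t) :
    ∀ t ≥ 1, u t - ρ • m t = u 0 - ρ • m 0 + ν • ∑ k ∈ Finset.range t, ξ k :=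
  stmt_10_general b γ c ρ ν hc hc1 hρ hν u m ξ hu hm
end

section
/- In the case b = 0 with z_{-1} deterministic, the limiting second moment of the adversary's error equals γ(1-γ)²‖x* - x_0‖² + (1-γ)‖z_{-1} - x_0 - (1-γ)(x* - x_0)‖² + γ(1-γ)·Q, where Q = ∑_t ‖ξ_t‖². -/
open MeasureTheory ProbabilityTheory Filter

/-!
Write `v 0 = z₋₁ - x 0` and `v (k + 1) = x k - x (k + 1)`. Each failed interception at time `k`
leaves exactly `v k` uncorrected, so `e t = ∑_{k ≤ t} 1{μ k = false} • v k`. For pairwise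
independent failure events of probability `p = 1 - γ`, the second moment of such a sum is
`p² ‖∑ v k‖² + p (1 - p) ∑ ‖v k‖²`, and both sums telescope: to `‖z₋₁ - x t‖²` and to
`‖z₋₁ - x 0‖² + ∑_{k < t} ‖ξ k‖²`. Letting `t → ∞` and completing the square gives the limit.
-/

section IndicatorSum

variable {Ω ι E : Type*} [NormedAddCommGroup E] [InnerProductSpace ℝ E]

lemma inner_indicator_const_indicator_const (A B : Set Ω) (v w : E) (ω : Ω) :
    inner ℝ (A.indicator (fun _ => v) ω) (B.indicator (fun _ => w) ω)
      = (A ∩ B).indicator (fun _ => inner ℝ v w) ω := by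
  by_cases hA : ω ∈ A <;> by_cases hB : ω ∈ B <;> simp [hA, hB]

lemma norm_sq_sum_indicator_const (s : Finset ι) (A : ι → Set Ω) (v : ι → E) (ω : Ω) :
    ‖∑ i ∈ s, (A i).indicator (fun _ => v i) ω‖ ^ 2
      = ∑ i ∈ s, ∑ j ∈ s, (A i ∩ A j).indicator (fun _ => inner ℝ (v i) (v j)) ω := by
  rw [← real_inner_self_eq_norm_sq, sum_inner]
  simp only [inner_sum, inner_indicator_const_indicator_const]

lemma integral_norm_sq_sum_indicator_const [MeasurableSpace Ω] {P : Measure Ω}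
    [IsFiniteMeasure P] {A : ι → Set Ω} (hA : ∀ i, MeasurableSet (A i)) {p : ℝ}
    (hp : ∀ i, P.real (A i) = p)
    (hpair : ∀ i j, i ≠ j → P.real (A i ∩ A j) = p ^ 2) (s : Finset ι) (v : ι → E) :
    ∫ ω, ‖∑ i ∈ s, (A i).indicator (fun _ => v i) ω‖ ^ 2 ∂P
      = p ^ 2 * ‖∑ i ∈ s, v i‖ ^ 2 + p * (1 - p) * ∑ i ∈ s, ‖v i‖ ^ 2 := by
  classical
  have hcov : ∀ i j, P.real (A i ∩ A j) = p ^ 2 + if i = j then p * (1 - p) else 0 := by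
    intro i j
    by_cases hij : i = j
    · subst hij; rw [Set.inter_self, hp, if_pos rfl]; ring
    · rw [hpair i j hij, if_neg hij, add_zero]
  have hint : ∀ i j, Integrable ((A i ∩ A j).indicator fun _ => inner ℝ (v i) (v j)) P :=
    fun i j => (integrable_const _).indicator ((hA i).inter (hA j))
  calc ∫ ω, ‖∑ i ∈ s, (A i).indicator (fun _ => v i) ω‖ ^ 2 ∂P
      = ∑ i ∈ s, ∑ j ∈ s, P.real (A i ∩ A j) * inner ℝ (v i) (v j) := by
        simp_rw [norm_sq_sum_indicator_const]
        rw [integral_finsetSum _ fun i _ => integrable_finsetSum _ fun j _ => hint i j]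
        refine Finset.sum_congr rfl fun i _ => ?_
        rw [integral_finsetSum _ fun j _ => hint i j]
        refine Finset.sum_congr rfl fun j _ => ?_
        rw [integral_indicator_const _ ((hA i).inter (hA j)), smul_eq_mul]
    _ = p ^ 2 * ‖∑ i ∈ s, v i‖ ^ 2 + p * (1 - p) * ∑ i ∈ s, ‖v i‖ ^ 2 := by
        simp only [hcov, add_mul, ite_mul, zero_mul, Finset.sum_add_distrib,
          Finset.sum_ite_eq, ← real_inner_self_eq_norm_sq, sum_inner, inner_sum,
          Finset.sum_ite_mem, Finset.inter_self, Finset.mul_sum, mul_assoc]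
        rw [Finset.sum_comm]

lemma mul_norm_sub_smul_sq (p : ℝ) (a d : E) :
    p ^ 2 * ‖a - d‖ ^ 2 + p * (1 - p) * ‖a‖ ^ 2
      = (1 - p) * p ^ 2 * ‖d‖ ^ 2 + p * ‖a - p • d‖ ^ 2 := by
  rw [norm_sub_sq_real, norm_sub_sq_real, real_inner_smul_right, norm_smul,
    Real.norm_eq_abs, mul_pow, sq_abs]
  ring

end IndicatorSum

section BackwardDiff

variable {E : Type*}

def backwardDiff [Sub E] (a : E) (x : ℕ → E) : ℕ → E
  | 0 => a - x 0
  | k + 1 => x k - x (k + 1)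

lemma sum_range_backwardDiff [AddCommGroup E] (a : E) (x : ℕ → E) (t : ℕ) :
    ∑ k ∈ Finset.range (t + 1), backwardDiff a x k = a - x t := by
  induction t with
  | zero => simp [backwardDiff]
  | succ t ih => rw [Finset.sum_range_succ, ih, backwardDiff]; abel

lemma sum_range_norm_sq_backwardDiff [SeminormedAddCommGroup E] (a : E) (x : ℕ → E) (t : ℕ) :
    ∑ k ∈ Finset.range (t + 1), ‖backwardDiff a x k‖ ^ 2
      = ‖a - x 0‖ ^ 2 + ∑ k ∈ Finset.range t, ‖x (k + 1) - x k‖ ^ 2 := by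
  simp only [Finset.sum_range_succ', backwardDiff, norm_sub_rev (x _) (x (_ + 1))]
  ring

end BackwardDiff

section Bernoulli

variable {Ω : Type*} [MeasurableSpace Ω] {P : Measure Ω}

lemma measureReal_preimage_false [IsProbabilityMeasure P] {b : Ω → Bool} (hb : Measurable b)
    {γ : ℝ} (hγ : 0 ≤ γ) (htrue : P {ω | b ω = true} = ENNReal.ofReal γ) :
    P.real (b ⁻¹' {false}) = 1 - γ := by
  have hcompl : b ⁻¹' {false} = (b ⁻¹' {true})ᶜ := by ext; simp
  have htrue' : P (b ⁻¹' {true}) = ENNReal.ofReal γ := htrue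
  rw [hcompl, probReal_compl_eq_one_sub (hb (measurableSet_singleton true)), measureReal_def,
    htrue', ENNReal.toReal_ofReal hγ]

lemma measureReal_inter_preimage_false {ι : Type*} {b : ι → Ω → Bool} (hindep : iIndepFun b P)
    {i j : ι} (hij : i ≠ j) :
    P.real (b i ⁻¹' {false} ∩ b j ⁻¹' {false})
      = P.real (b i ⁻¹' {false}) * P.real (b j ⁻¹' {false}) := by
  simp only [measureReal_def, ← ENNReal.toReal_mul]
  rw [(hindep.indepFun hij).measure_inter_preimage_eq_mul _ _
    (measurableSet_singleton _) (measurableSet_singleton _)]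

end Bernoulli

lemma eq_sum_indicator_backwardDiff {Ω E : Type*} [AddCommGroup E] (μ : ℕ → Ω → Bool)
    (x : ℕ → E) (zinit : E) (z e : ℕ → Ω → E)
    (hz0 : ∀ ω, z 0 ω = if μ 0 ω then x 0 else zinit)
    (hz : ∀ t ω, z (t + 1) ω = if μ (t + 1) ω then x (t + 1) - x t else 0)
    (he : ∀ t ω, e t ω = (∑ k ∈ Finset.range (t + 1), z k ω) - x t) (t : ℕ) (ω : Ω) :
    e t ω = ∑ k ∈ Finset.range (t + 1),
      (μ k ⁻¹' {false}).indicator (fun _ => backwardDiff zinit x k) ω := by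
  induction t with
  | zero =>
    rw [he, Finset.sum_range_one, Finset.sum_range_one, hz0]
    cases h : μ 0 ω <;> simp [h, backwardDiff]
  | succ t ih =>
    rw [Finset.sum_range_succ, ← ih, he, he, Finset.sum_range_succ, hz]
    cases h : μ (t + 1) ω <;> simp [h, backwardDiff]
    abel

theorem stmt_14_general {n : ℕ} {Ω : Type*} [MeasurableSpace Ω] (P : Measure Ω)
    [IsProbabilityMeasure P] (γ : ℝ) (hγ0 : 0 < γ)
    (μ : ℕ → Ω → Bool) (hmeas : ∀ t, Measurable (μ t))
    (hindep : iIndepFun μ P)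
    (hber : ∀ t, P {ω | μ t ω = true} = ENNReal.ofReal γ)
    (x : ℕ → EuclideanSpace ℝ (Fin n)) (xstar : EuclideanSpace ℝ (Fin n))
    (hx : Tendsto x atTop (nhds xstar))
    (Q : ℝ) (hQ : HasSum (fun t => ‖x (t + 1) - x t‖ ^ 2) Q)
    (zinit : EuclideanSpace ℝ (Fin n))
    (z : ℕ → Ω → EuclideanSpace ℝ (Fin n))
    (hz0 : ∀ ω, z 0 ω = if μ 0 ω then x 0 else zinit)
    (hz : ∀ t ω, z (t + 1) ω = if μ (t + 1) ω then x (t + 1) - x t else 0)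
    (e : ℕ → Ω → EuclideanSpace ℝ (Fin n))
    (he : ∀ t ω, e t ω = (∑ k ∈ Finset.range (t + 1), z k ω) - x t) :
    Tendsto (fun t => ∫ ω, ‖e t ω‖ ^ 2 ∂P) atTop
      (nhds (γ * (1 - γ) ^ 2 * ‖xstar - x 0‖ ^ 2
        + (1 - γ) * ‖zinit - x 0 - (1 - γ) • (xstar - x 0)‖ ^ 2
        + γ * (1 - γ) * Q)) := by
  have hfail : ∀ t, P.real (μ t ⁻¹' {false}) = 1 - γ :=
    fun t => measureReal_preimage_false (hmeas t) hγ0.le (hber t)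
  have hmoment : ∀ t, ∫ ω, ‖e t ω‖ ^ 2 ∂P = (1 - γ) ^ 2 * ‖zinit - x t‖ ^ 2
      + (1 - γ) * (1 - (1 - γ)) *
        (‖zinit - x 0‖ ^ 2 + ∑ k ∈ Finset.range t, ‖x (k + 1) - x k‖ ^ 2) := by
    intro t
    simp_rw [eq_sum_indicator_backwardDiff μ x zinit z e hz0 hz he t]
    rw [integral_norm_sq_sum_indicator_const (fun t => hmeas t (measurableSet_singleton false))
      hfail (fun i j hij => by rw [measureReal_inter_preimage_false hindep hij, hfail, hfail, sq]),
      sum_range_backwardDiff, sum_range_norm_sq_backwardDiff]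
  have hlim :=
    ((((tendsto_const_nhds (x := zinit)).sub hx).norm.pow 2).const_mul ((1 - γ) ^ 2)).add
      ((hQ.tendsto_sum_nat.const_add (‖zinit - x 0‖ ^ 2)).const_mul ((1 - γ) * (1 - (1 - γ))))
  rw [funext hmoment]
  convert hlim using 2
  rw [← sub_sub_sub_cancel_right zinit xstar (x 0), mul_add, ← add_assoc,
    mul_norm_sub_smul_sq]
  ring

/-- Innovation-sharing protection analysis, case `b = 0` with deterministic `z₋₁`.
The messages are `ξ t = x (t+1) - x t` (with `ξ₋₁ = x 0`); the adversary intercepts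
each message independently with probability `γ`.  With `b = 0` (and `b₀ = 1`), the
adversary's state is `z 0 = x 0` upon success and `zinit` (= `z₋₁`) upon failure, and
`z (t+1) = ξ t` upon success, `0` upon failure.  Its estimate of `x t` is
`x̂ t = ∑_{k ≤ t} z k` and the error is `e t = x̂ t - x t`. -/
theorem stmt_14 {n : ℕ} {Ω : Type*} [MeasurableSpace Ω] (P : Measure Ω)
    [IsProbabilityMeasure P] (γ : ℝ) (hγ0 : 0 < γ) (hγ1 : γ < 1)
    (μ : ℕ → Ω → Bool) (hmeas : ∀ t, Measurable (μ t))
    (hindep : iIndepFun μ P)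
    (hber : ∀ t, P {ω | μ t ω = true} = ENNReal.ofReal γ)
    (x : ℕ → EuclideanSpace ℝ (Fin n)) (xstar : EuclideanSpace ℝ (Fin n))
    (hx : Tendsto x atTop (nhds xstar))
    (Q : ℝ) (hQ : HasSum (fun t => ‖x (t + 1) - x t‖ ^ 2) Q)
    (zinit : EuclideanSpace ℝ (Fin n))
    (z : ℕ → Ω → EuclideanSpace ℝ (Fin n))
    (hz0 : ∀ ω, z 0 ω = if μ 0 ω then x 0 else zinit)
    (hz : ∀ t ω, z (t + 1) ω = if μ (t + 1) ω then x (t + 1) - x t else 0)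
    (e : ℕ → Ω → EuclideanSpace ℝ (Fin n))
    (he : ∀ t ω, e t ω = (∑ k ∈ Finset.range (t + 1), z k ω) - x t) :
    Tendsto (fun t => ∫ ω, ‖e t ω‖ ^ 2 ∂P) atTop
      (nhds (γ * (1 - γ) ^ 2 * ‖xstar - x 0‖ ^ 2
        + (1 - γ) * ‖zinit - x 0 - (1 - γ) • (xstar - x 0)‖ ^ 2
        + γ * (1 - γ) * Q)) :=
  stmt_14_general P γ hγ0 μ hmeas hindep hber x xstar hx Q hQ zinit z hz0 hz e he
end
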